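/- Let Q : ℝ → SO(3) and v : ℝ → ℝ³ satisfy Q̇ = Q ω̂ and v̇ = −ω̂ v for a continuous ω : ℝ → ℝ³, with initial values Q(0) = Q₀, v(0) = v₀. Then v(t) = Q(t)ᵀ Q₀ v₀ for all t, and consequently any solution of ẋ = Qv with x(0) = x₀ is given by x(t) = x₀ + t·Q₀v₀. -/

import Mathlib

open Matrix

attribute [local instance] Matrix.linftyOpNormedAddCommGroup Matrix.linftyOpNormedRing
  Matrix.linftyOpNormedAlgebra

/-- The hat map sending `v ∈ ℝ³` to the skew matrix `v̂` with `v̂ w = v × w`. -/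
def hat (v : Fin 3 → ℝ) : Matrix (Fin 3) (Fin 3) ℝ :=
  !![0, -v 2, v 1; v 2, 0, -v 0; -v 1, v 0, 0]

/-- If `Q : ℝ → SO(3)` and `v : ℝ → ℝ³` satisfy `Q̇ = Q ω̂` and `v̇ = −ω̂ v` for a
continuous `ω`, then `v(t) = Q(t)ᵀ Q₀ v₀`, and any solution of `ẋ = Q v` is
`x(t) = x₀ + t Q₀ v₀`. -/
theorem free_rigid_body_kinematic_flow
    (ω : ℝ → Fin 3 → ℝ) (hω : Continuous ω)
    (Q : ℝ → Matrix (Fin 3) (Fin 3) ℝ)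
    (hSO : ∀ t, (Q t)ᵀ * Q t = 1 ∧ (Q t).det = 1)
    (hQ : ∀ t : ℝ, HasDerivAt Q (Q t * hat (ω t)) t)
    (v : ℝ → Fin 3 → ℝ)
    (hv : ∀ t : ℝ, HasDerivAt v (-(hat (ω t) *ᵥ v t)) t) :
    (∀ t : ℝ, v t = (Q t)ᵀ *ᵥ (Q 0 *ᵥ v 0)) ∧
    (∀ x : ℝ → Fin 3 → ℝ, (∀ t : ℝ, HasDerivAt x (Q t *ᵥ v t) t) →
      ∀ t : ℝ, x t = x 0 + t • (Q 0 *ᵥ v 0)) := by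
  -- entry extraction continuous linear maps
  have hQij : ∀ (i j : Fin 3) (t : ℝ),
      HasDerivAt (fun s => Q s i j) ((Q t * hat (ω t)) i j) t := by
    intro i j t
    exact (LinearMap.toContinuousLinearMap
      (Matrix.entryLinearMap ℝ ℝ i j)).hasFDerivAt.comp_hasDerivAt t (hQ t)
  have hvi : ∀ (i : Fin 3) (t : ℝ),
      HasDerivAt (fun s => v s i) ((-(hat (ω t) *ᵥ v t)) i) t := by
    intro i t
    exact hasDerivAt_pi.1 (hv t) i
  -- w t = Q t *ᵥ v t has zero derivative
  have hw : ∀ t : ℝ, HasDerivAt (fun s => Q s *ᵥ v s) 0 t := by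
    intro t
    rw [hasDerivAt_pi]
    intro i
    have h1 : HasDerivAt (fun s => Q s *ᵥ v s)
        ((Q t * hat (ω t)) *ᵥ v t + Q t *ᵥ (-(hat (ω t) *ᵥ v t))) t := by
      rw [hasDerivAt_pi]
      intro k
      have : ∀ s, (Q s *ᵥ v s) k = ∑ j, Q s k j * v s j := by
        intro s; simp [Matrix.mulVec, dotProduct]
      simp only [this]
      have hsum : HasDerivAt (fun s => ∑ j, Q s k j * v s j)
          (∑ j, ((Q t * hat (ω t)) k j * v t j + Q t k j * (-(hat (ω t) *ᵥ v t)) j)) t :=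
        HasDerivAt.fun_sum fun j _ => (hQij k j t).mul (hvi j t)
      refine hsum.congr_deriv ?_
      simp [Matrix.mulVec, dotProduct, Finset.sum_add_distrib]
    have h2 : (Q t * hat (ω t)) *ᵥ v t + Q t *ᵥ (-(hat (ω t) *ᵥ v t)) = 0 := by
      rw [Matrix.mulVec_neg, ← Matrix.mulVec_mulVec]
      simp
    rw [h2] at h1
    exact hasDerivAt_pi.1 h1 i
  have hconst : ∀ t : ℝ, Q t *ᵥ v t = Q 0 *ᵥ v 0 := by
    intro t
    exact is_const_of_deriv_eq_zero (fun s => (hw s).differentiableAt)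
      (fun s => (hw s).deriv) t 0
  have hv' : ∀ t : ℝ, v t = (Q t)ᵀ *ᵥ (Q 0 *ᵥ v 0) := by
    intro t
    rw [← hconst t, Matrix.mulVec_mulVec, (hSO t).1, Matrix.one_mulVec]
  refine ⟨hv', ?_⟩
  intro x hx t
  have hg : ∀ s : ℝ, HasDerivAt (fun u => x u - u • (Q 0 *ᵥ v 0)) 0 s := by
    intro s
    have := (hx s).sub ((hasDerivAt_id s).smul_const (Q 0 *ᵥ v 0))
    refine this.congr_deriv ?_
    simp [hconst s]
  have := is_const_of_deriv_eq_zero (f := fun u => x u - u • (Q 0 *ᵥ v 0))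
      (fun s => (hg s).differentiableAt) (fun s => (hg s).deriv) t 0
  simp only [zero_smul, sub_zero] at this
  have := this
  abel_nf at this ⊢
  linear_combination (norm := abel) this
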